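/- arXiv:2103.09443 — 2 statements merged into one kernel-verified Lean document; each statement's English description precedes it below -/
import Mathlib

section
/- Let ω be a word of length 2k with b distinct letters such that |Π(ω)|/n^{b+1} → 1 as n → ∞. Then: (i) the last new letter of ω appears only in pure blocks (maximal consecutive strings of the same letter) of even sizes; (ii) for circuits π ∈ Π(ω) in which the b+1 vertex classes are distinct, any two successive occurrences of the same letter, at positions i < j, obey the (C2) constraint, i.e. π(i−1) = π(j) and π(i) = π(j−1); and (iii) between any two successive occurrences of any letter, every other letter appears an equal number of times in odd and in even positions. Consequently ω is a special symmetric word, i.e. the partition corresponding to ω lies in SS(2k). -/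
/-!
Counting circuits with at most `b` distinct values shows that they are `o(n^{b+1})`, so some
circuit takes `b + 1` distinct values, necessarily at `0` and at the generating positions
`i_1 < ⋯ < i_b`. For such a circuit the edge of the `j`-th letter joins `i_j` to the generating
position carrying the value at `i_j - 1`, which comes earlier: these edges form a tree and the
circuit is a closed walk on it. Two successive occurrences of a letter cross the same edge with
no crossing in between, so the walk comes back to the same side of it: this is `(C2)`. Between
them the walk is closed, hence crosses every other edge as often downwards as upwards, and since
the depth parity alternates along the walk, downward and upward crossings happen at positions of
opposite parities. Finally the edge of the last new letter ends in a leaf that no other step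
visits, so every run of that letter enters and leaves the leaf and has even length.
-/

open MeasureTheory ProbabilityTheory Filter Finset
open scoped BigOperators ENNReal NNReal Topology Classical

noncomputable section

/-- The empirical spectral distribution of a matrix: `(1/n) ∑ δ_{λ_i}` where the `λ_i`
are the eigenvalues (for a Hermitian, i.e. real symmetric, matrix); junk value `0`
for non-Hermitian matrices. -/
noncomputable def esdOfMatrix {n : ℕ} (A : Matrix (Fin n) (Fin n) ℝ) : Measure ℝ :=
  if h : A.IsHermitian then ((n : ℝ≥0∞))⁻¹ • ∑ i : Fin n, Measure.dirac (h.eigenvalues i)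
  else 0

/-- Weak convergence of a sequence of measures on `ℝ`. -/
def WeakLim (μs : ℕ → Measure ℝ) (ν : Measure ℝ) : Prop :=
  ∀ f : BoundedContinuousFunction ℝ ℝ,
    Tendsto (fun n => ∫ t, f t ∂(μs n)) atTop (𝓝 (∫ t, f t ∂ν))

/-- `P` is a partition of `{1, …, m}`. -/
def IsPartitionOf (m : ℕ) (P : Finset (Finset ℕ)) : Prop :=
  (∀ B ∈ P, B.Nonempty) ∧ (∀ B ∈ P, B ⊆ Finset.Icc 1 m) ∧
  (∀ B ∈ P, ∀ B' ∈ P, B ≠ B' → Disjoint B B') ∧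
  (∀ i ∈ Finset.Icc 1 m, ∃ B ∈ P, i ∈ B)

/-- The block of the partition `P` containing `a` (junk value `∅` if there is none). -/
noncomputable def partOf (P : Finset (Finset ℕ)) (a : ℕ) : Finset ℕ :=
  (P.filter fun B => a ∈ B).sup id

/-- `B` is a union of pairwise disjoint sets of consecutive integers, each of even size. -/
def IsEvenIntervalUnion (B : Finset ℕ) : Prop :=
  ∃ S : Finset (ℕ × ℕ),
    (∀ p ∈ S, p.1 ≤ p.2 ∧ Even (Finset.Icc p.1 p.2).card) ∧
    (∀ p ∈ S, ∀ q ∈ S, p ≠ q → Disjoint (Finset.Icc p.1 p.2) (Finset.Icc q.1 q.2)) ∧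
    B = S.sup fun p => Finset.Icc p.1 p.2

/-- A partition of `{1, …, m}` is special symmetric if (i) its last block (the block whose
least element is the largest) is a union of even-sized sets of consecutive integers, and
(ii) between any two successive elements of any block, any other block has an even number
of elements, appearing an equal number of times in odd and in even positions. -/
def IsSpecialSymmetric (m : ℕ) (P : Finset (Finset ℕ)) : Prop :=
  IsPartitionOf m P ∧
  (∀ B ∈ P, (∀ B' ∈ P, B' ≠ B → ∃ a ∈ B', ∀ c ∈ B, a < c) → IsEvenIntervalUnion B) ∧
  (∀ B ∈ P, ∀ i ∈ B, ∀ j ∈ B, i < j → (∀ l ∈ B, ¬(i < l ∧ l < j)) →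
    ∀ B' ∈ P, B' ≠ B →
      Even ((B'.filter fun l => i < l ∧ l < j).card) ∧
      (B'.filter fun l => i < l ∧ l < j ∧ Odd l).card
        = (B'.filter fun l => i < l ∧ l < j ∧ Even l).card)

/-- The finite set of all partitions of `{1, …, m}`. -/
noncomputable def partitionFinset (m : ℕ) : Finset (Finset (Finset ℕ)) :=
  ((Finset.Icc 1 m).powerset.powerset).filter (IsPartitionOf m)

/-- The finite set `SS(m)` of special symmetric partitions of `{1, …, m}`. -/
noncomputable def SSFinset (m : ℕ) : Finset (Finset (Finset ℕ)) :=
  ((Finset.Icc 1 m).powerset.powerset).filter (IsSpecialSymmetric m)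

/-- The finite set `SS_b(m)`: special symmetric partitions of `{1, …, m}` with `b` blocks. -/
noncomputable def SSbFinset (m b : ℕ) : Finset (Finset (Finset ℕ)) :=
  (SSFinset m).filter fun P => P.card = b

/-- The positions in `{1, …, m}` of first occurrences of the letters of the word of `P`. -/
noncomputable def firstOccs (m : ℕ) (P : Finset (Finset ℕ)) : Finset ℕ :=
  (Finset.Icc 1 m).filter fun i => ∀ i' ∈ Finset.Icc 1 m, i' < i → partOf P i' ≠ partOf P i

/-- The position `i_j` of the first occurrence of the `j`-th distinct letter (`1`-indexed)
of the word of the partition `P`. -/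
noncomputable def iPos (m : ℕ) (P : Finset (Finset ℕ)) (j : ℕ) : ℕ :=
  ((firstOccs m P).sort (· ≤ ·)).getD (j - 1) 0

/-- The basic identifications of the vertices `{0, 1, …, m}` of a circuit forced by the
`(C2)` constraints between successive occurrences of the same letter of the word of `P`,
together with the circuit condition identifying the vertices `0` and `m`. -/
def C2Rel (m : ℕ) (P : Finset (Finset ℕ)) : ℕ → ℕ → Prop := fun u v =>
  (u = 0 ∧ v = m) ∨
  ∃ i ∈ Finset.Icc 1 m, ∃ j ∈ Finset.Icc 1 m, i < j ∧ partOf P i = partOf P j ∧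
    (∀ l ∈ Finset.Icc 1 m, i < l → l < j → partOf P l ≠ partOf P i) ∧
    ((u = i - 1 ∧ v = j) ∨ (u = i ∧ v = j - 1))

/-- The equivalence of the vertices `{0, 1, …, m}` generated by the `(C2)` identifications:
its classes are the vertex classes of (circuits of) the word of `P`. -/
def vertexEquiv (m : ℕ) (P : Finset (Finset ℕ)) : ℕ → ℕ → Prop :=
  Relation.EqvGen (C2Rel m P)

/-- The label in `{0, 1, …, b}` of the vertex class of a vertex `v`: the class of the
vertex `0` is labelled `0`, and the class of the generating vertex `i_j` of the `j`-th
distinct letter is labelled `j`. -/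
noncomputable def labOf (m : ℕ) (P : Finset (Finset ℕ)) (v : ℕ) : ℕ :=
  if vertexEquiv m P v 0 then 0
  else sInf {j : ℕ | 1 ≤ j ∧ vertexEquiv m P v (iPos m P j)}

open Fin.NatCast in
/-- The contribution `∫_{[0,1]^{b+1}} ∏_{j=1}^b g_{s_j}(x_{t_j}, x_{l_j}) dx` of a
special symmetric partition `P` of `{1, …, m}` with `b` blocks, where `s_j` is the size of
the `j`-th block of `P` and `(t_j, l_j)` (with `l_j = j`) are the labels of the vertex
classes of the two endpoints of the first occurrence of the `j`-th letter. -/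
noncomputable def ssIntegral (g : ℕ → ℝ → ℝ → ℝ) (m b : ℕ) (P : Finset (Finset ℕ)) : ℝ :=
  ∫ xv : Fin (b + 1) → ℝ in Set.univ.pi fun _ => Set.Icc (0 : ℝ) 1,
    ∏ j ∈ Finset.Icc 1 b,
      g ((partOf P (iPos m P j)).card)
        (xv ((labOf m P (iPos m P j - 1) : ℕ) : Fin (b + 1)))
        (xv ((j : ℕ) : Fin (b + 1)))

/-- A bounded Riemann integrable function on `[0,1]²`: bounded, and (by Lebesgue's
criterion) almost everywhere continuous on the square. -/
def BoundedRiemann (f : ℝ → ℝ → ℝ) : Prop :=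
  (∃ C, ∀ a ∈ Set.Icc (0 : ℝ) 1, ∀ b ∈ Set.Icc (0 : ℝ) 1, |f a b| ≤ C) ∧
  ∀ᵐ p ∂(volume.restrict (Set.Icc (0 : ℝ) 1 ×ˢ Set.Icc (0 : ℝ) 1)),
    ContinuousWithinAt (fun q : ℝ × ℝ => f q.1 q.2) (Set.Icc (0 : ℝ) 1 ×ˢ Set.Icc (0 : ℝ) 1) p

/-- The truncated entry `x_{ij,n} 1_{{|x_{ij,n}| ≤ t_n}}` (with `t_n ∈ [0,∞]`). -/
noncomputable def trunc {Ω : Type*} (x : ℕ → ℕ → ℕ → Ω → ℝ) (t : ℕ → ℝ≥0∞)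
    (n i j : ℕ) (ω : Ω) : ℝ :=
  if ENNReal.ofReal |x n i j ω| ≤ t n then x n i j ω else 0

/-- The `n × n` matrix with `(i,j)` entry `e i j ω` (`1`-indexed). -/
noncomputable def matOf {Ω : Type*} (e : ℕ → ℕ → ℕ → Ω → ℝ) (n : ℕ) (ω : Ω) :
    Matrix (Fin n) (Fin n) ℝ :=
  Matrix.of fun i j : Fin n => e n ((i : ℕ) + 1) ((j : ℕ) + 1) ω

/-- `M_s = ‖g_s‖_∞` on `[0,1]²` for even `s`, and `M_s = 0` for odd `s`. -/
noncomputable def Msup (g : ℕ → ℝ → ℝ → ℝ) (s : ℕ) : ℝ :=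
  if Even s then
    sSup {r : ℝ | ∃ a ∈ Set.Icc (0 : ℝ) 1, ∃ b ∈ Set.Icc (0 : ℝ) 1, r = |g s a b|}
  else 0

/-- `α_{2k} = ∑_{σ ∈ P(2k)} M_σ`, the multiplicative extension of `M` summed over all
partitions of `{1, …, 2k}`. -/
noncomputable def alphaSeq (g : ℕ → ℝ → ℝ → ℝ) (k : ℕ) : ℝ :=
  ∑ P ∈ partitionFinset (2 * k), ∏ B ∈ P, Msup g B.card

/-- Carleman's condition `∑_k β_{2k}^{-1/(2k)} = ∞` for a (moment) sequence `β`. -/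
def CarlemanCond (β : ℕ → ℝ) : Prop :=
  Tendsto (fun N => ∑ k ∈ Finset.Icc 1 N, β (2 * k) ^ (-(1 : ℝ) / (2 * k))) atTop atTop

/-- Assumption A of Bose, Saha, Sen and Sen, "Random matrices with independent entries:
beyond non-crossing partitions". -/
structure AssumptionA {Ω : Type*} [MeasurableSpace Ω] (μpr : Measure Ω)
    (x : ℕ → ℕ → ℕ → Ω → ℝ) (t : ℕ → ℝ≥0∞) (gn : ℕ → ℕ → ℝ → ℝ → ℝ)
    (g : ℕ → ℝ → ℝ → ℝ) : Prop where
  meas : ∀ n i j, Measurable (x n i j)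
  symm : ∀ n i j ω, x n i j ω = x n j i ω
  indep : ∀ n, iIndepFun
    (fun p : {p : ℕ × ℕ // 1 ≤ p.1 ∧ p.1 ≤ p.2 ∧ p.2 ≤ n} => x n p.1.1 p.1.2) μpr
  bddRiemann : ∀ k n : ℕ, 1 ≤ k → BoundedRiemann (gn (2 * k) n)
  momEven : ∀ k n i j : ℕ, 1 ≤ k → 1 ≤ i → i ≤ j → j ≤ n →
    (n : ℝ) * ∫ ω, trunc x t n i j ω ^ (2 * k) ∂μpr = gn (2 * k) n (i / n) (j / n)
  momOdd : ∀ k : ℕ, 1 ≤ k → ∀ α : ℝ, α < 1 →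
    Tendsto (fun n : ℕ => (n : ℝ) ^ α *
      ⨆ p : {p : ℕ × ℕ // 1 ≤ p.1 ∧ p.1 ≤ p.2 ∧ p.2 ≤ n},
        |∫ ω, trunc x t n p.1.1 p.1.2 ω ^ (2 * k - 1) ∂μpr|) atTop (𝓝 0)
  unif : ∀ k : ℕ, 1 ≤ k → TendstoUniformlyOn (fun n p => gn (2 * k) n p.1 p.2)
    (fun p => g (2 * k) p.1 p.2) atTop (Set.Icc 0 1 ×ˢ Set.Icc 0 1)
  carleman : CarlemanCond (alphaSeq g)


/-- Convergence in probability of real random variables to a constant. -/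
def TendstoInProbability {Ω : Type*} [MeasurableSpace Ω] (μpr : Measure Ω)
    (Z : ℕ → Ω → ℝ) (c : ℝ) : Prop :=
  ∀ ε : ℝ, 0 < ε → Tendsto (fun n => μpr {ω | ε ≤ |Z n ω - c|}) atTop (𝓝 0)

/-- The semicircular distribution with variance `c`: density `(2πc)⁻¹ √(4c − x²)`
on `[−2√c, 2√c]`. -/
noncomputable def semicircularMeasure (c : ℝ) : Measure ℝ :=
  volume.withDensity fun s =>
    ENNReal.ofReal ((Set.Icc (-(2 * Real.sqrt c)) (2 * Real.sqrt c)).indicator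
      (fun u => (2 * Real.pi * c)⁻¹ * Real.sqrt (4 * c - u ^ 2)) s)

/-- The squared `L²`-Wasserstein distance between two probability measures on `ℝ`:
the infimum over all couplings of the expected squared difference. -/
noncomputable def d2sq (μ ν : Measure ℝ) : ℝ :=
  sInf {r : ℝ | ∃ ρ : Measure (ℝ × ℝ), IsProbabilityMeasure ρ ∧
    ρ.map Prod.fst = μ ∧ ρ.map Prod.snd = ν ∧
    Integrable (fun q : ℝ × ℝ => (q.1 - q.2) ^ 2) ρ ∧
    r = ∫ q : ℝ × ℝ, (q.1 - q.2) ^ 2 ∂ρ}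

/-- Extension of a vertex function `Fin (m+1) → Fin n` to all of `ℕ` (by reduction
mod `m+1`); positions `0, …, m` are the only ones which are used. -/
def extFin {m n : ℕ} (v : Fin (m + 1) → Fin n) (i : ℕ) : Fin n :=
  v ⟨i % (m + 1), Nat.mod_lt i (Nat.succ_pos m)⟩

/-- The class `Π(ω)` of circuits of length `m` with values in `{1, …, n}` (encoded as
`Fin n`) associated with the word (partition) `P` of `{1, …, m}`: circuits `π` with
`π(0) = π(m)` such that `ω[i] = ω[j] ⟺ {π(i−1), π(i)} = {π(j−1), π(j)}` as unordered
pairs. -/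
noncomputable def circuitsOf (m : ℕ) (P : Finset (Finset ℕ)) (n : ℕ) :
    Finset (Fin (m + 1) → Fin n) :=
  Finset.univ.filter fun v =>
    extFin v m = extFin v 0 ∧
    ∀ i ∈ Finset.Icc 1 m, ∀ j ∈ Finset.Icc 1 m,
      (partOf P i = partOf P j ↔
        ({extFin v (i - 1), extFin v i} : Finset (Fin n)) = {extFin v (j - 1), extFin v j})

/-- The (unordered) edge of the circuit `v` at position `i`. -/
noncomputable def edgeOf {k n : ℕ} (v : Fin (k + 1) → Fin n) (i : ℕ) : Finset (Fin n) :=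
  {extFin v (i - 1), extFin v i}

/-- Quadruples of circuits of length `k` with values in `{1, …, n}` that are jointly
matched and cross matched, with exactly `b` distinct edges in total. -/
noncomputable def quadCircuits (k n b : ℕ) : Finset (Fin 4 → Fin (k + 1) → Fin n) :=
  Finset.univ.filter fun q =>
    (∀ c : Fin 4, extFin (q c) k = extFin (q c) 0) ∧
    (∀ c : Fin 4, ∀ i ∈ Finset.Icc 1 k,
      2 ≤ ∑ c' : Fin 4,
        ((Finset.Icc 1 k).filter fun i' => edgeOf (q c') i' = edgeOf (q c) i).card) ∧
    (∀ c : Fin 4, ∃ i ∈ Finset.Icc 1 k, ∃ c' : Fin 4, c' ≠ c ∧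
      ∃ i' ∈ Finset.Icc 1 k, edgeOf (q c') i' = edgeOf (q c) i) ∧
    ((Finset.univ : Finset (Fin 4)).biUnion
      (fun c => (Finset.Icc 1 k).image fun i => edgeOf (q c) i)).card = b

/-- `P` is a pair-partition: every block has exactly two elements. -/
def IsPairPartition (P : Finset (Finset ℕ)) : Prop := ∀ B ∈ P, B.card = 2

/-- `P` has a crossing: there are `a < b < c < d` with `a, c` in one block and `b, d`
in a different block. -/
def HasCrossing (P : Finset (Finset ℕ)) : Prop :=
  ∃ a b c d : ℕ, a < b ∧ b < c ∧ c < d ∧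
    ∃ B ∈ P, ∃ B' ∈ P, B ≠ B' ∧ a ∈ B ∧ c ∈ B ∧ b ∈ B' ∧ d ∈ B'

/-- `a` is an ancestor of `v` (or equal to it) for the parent function `p`. -/
def ancRel (p : ℕ → ℕ) (a v : ℕ) : Prop := ∃ s : ℕ, p^[s] v = a

/-- `(p, c)` encodes a colored rooted plane tree with vertices `0, 1, …, k` (the root
being `0`) and colors `0, 1, …, b` (the root having color `0`): `p` is the parent
function and `c` the coloring.  The vertices are labelled in depth-first order, left to
right (which encodes the plane structure); every color is used; two vertices of the same
color have parents of the same color, and are at the same distance from the root. -/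
def IsColoredTree (k b : ℕ) (p c : ℕ → ℕ) : Prop :=
  p 0 = 0 ∧ (∀ v, k < v → p v = 0) ∧
  (∀ v, 1 ≤ v → v ≤ k → p v < v) ∧
  (∀ v, 2 ≤ v → v ≤ k → ancRel p (p v) (v - 1)) ∧
  c 0 = 0 ∧ (∀ v, k < v → c v = 0) ∧
  (∀ v, 1 ≤ v → v ≤ k → 1 ≤ c v ∧ c v ≤ b) ∧
  (∀ j, 1 ≤ j → j ≤ b → ∃ v, 1 ≤ v ∧ v ≤ k ∧ c v = j) ∧
  (∀ u v, 1 ≤ u → u ≤ k → 1 ≤ v → v ≤ k → c u = c v → c (p u) = c (p v)) ∧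
  (∀ u v, 1 ≤ u → u ≤ k → 1 ≤ v → v ≤ k → c u = c v →
    ∀ s : ℕ, (p^[s] u = 0 ↔ p^[s] v = 0))

/-- The number `|E(i,j)|` of edges of the colored tree `(p, c)` whose endpoints have
colors `i` and `j`. -/
noncomputable def edgeColorCount (k : ℕ) (p c : ℕ → ℕ) (i j : ℕ) : ℕ :=
  ((Finset.Icc 1 k).filter fun v => (c v = j ∧ c (p v) = i) ∨ (c v = i ∧ c (p v) = j)).card

open Fin.NatCast in
/-- The generalized homomorphism density
`t(T′, {M_{2k,n}}) = ∫_{[0,1]^{b+1}} ∏_{(i,j) : E(i,j) ≠ ∅} g_{2|E(i,j)|}(x_i, x_j) dx`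
of the colored rooted tree `(p, c)` with `k+1` vertices and `b+1` colors. -/
noncomputable def homDensity (g : ℕ → ℝ → ℝ → ℝ) (k b : ℕ) (p c : ℕ → ℕ) : ℝ :=
  ∫ xv : Fin (b + 1) → ℝ in Set.univ.pi fun _ => Set.Icc (0 : ℝ) 1,
    ∏ i ∈ Finset.range (b + 1), ∏ j ∈ Finset.range (b + 1),
      if i < j ∧ 0 < edgeColorCount k p c i j then
        g (2 * edgeColorCount k p c i j) (xv ((i : ℕ) : Fin (b + 1))) (xv ((j : ℕ) : Fin (b + 1)))
      else 1

/-- `(1/n) ∑_{i,j} x_{ij,n}² 1_{{|x_{ij,n}| > t_n}}`, the contribution of the truncated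
tails. -/
noncomputable def truncTail {Ω : Type*} (x : ℕ → ℕ → ℕ → Ω → ℝ) (t : ℕ → ℝ≥0∞)
    (n : ℕ) (ω : Ω) : ℝ :=
  (1 / n : ℝ) * ∑ i ∈ Finset.Icc 1 n, ∑ j ∈ Finset.Icc 1 n,
    if t n < ENNReal.ofReal |x n i j ω| then x n i j ω ^ 2 else 0

/-- `{0, C_2, 0, C_4, 0, …}` is the cumulant sequence of a probability distribution `G`
whose moment sequence satisfies Carleman's condition (via the moment–cumulant formula
`β_m = ∑_{σ ∈ P(m)} κ_σ`). -/
def IsCumulantSeqWithCarleman (C : ℕ → ℝ) : Prop :=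
  ∃ (G : Measure ℝ) (β : ℕ → ℝ), IsProbabilityMeasure G ∧
    (∀ m : ℕ, 1 ≤ m → Integrable (fun s : ℝ => s ^ m) G ∧ ∫ s, s ^ m ∂G = β m) ∧
    (∀ m : ℕ, 1 ≤ m →
      β m = ∑ P ∈ partitionFinset m, ∏ B ∈ P, (if Even B.card then C B.card else 0)) ∧
    CarlemanCond β

end

/-- Depth in the forest on `ℕ` with parent map `p`; the recursion stops (with value `0`) where
`p` fails to decrease. -/
def treeDepth (p : ℕ → ℕ) : ℕ → ℕ
  | 0 => 0
  | t + 1 => if p (t + 1) ≤ t then treeDepth p (p (t + 1)) + 1 else 0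

theorem treeDepth_eq_of_parent_lt {p : ℕ → ℕ} {t : ℕ} (h : p t < t) :
    treeDepth p t = treeDepth p (p t) + 1 := by
  obtain ⟨t, rfl⟩ := Nat.exists_eq_add_one_of_ne_zero (Nat.ne_zero_of_lt h)
  rw [treeDepth, if_pos (Nat.le_of_lt_succ h)]

theorem ancRel_parent_iff {p : ℕ → ℕ} {t u : ℕ} (hu : u ≠ t) :
    ancRel p t (p u) ↔ ancRel p t u := by
  constructor
  · rintro ⟨s, hs⟩
    exact ⟨s + 1, by rwa [Function.iterate_succ_apply]⟩
  · rintro ⟨_ | s, hs⟩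
    · exact absurd hs hu
    · exact ⟨s, by rwa [Function.iterate_succ_apply] at hs⟩

theorem iterate_le_of_parent_le {p : ℕ → ℕ} (hp : ∀ t, p t ≤ t) (s u : ℕ) : p^[s] u ≤ u := by
  induction s generalizing u with
  | zero => rfl
  | succ s ih =>
    rw [Function.iterate_succ_apply]
    exact (ih (p u)).trans (hp u)

theorem not_ancRel_parent {p : ℕ → ℕ} (hp : ∀ t, p t ≤ t) {t : ℕ} (ht : p t < t) :
    ¬ ancRel p t (p t) := by
  rintro ⟨s, hs⟩
  have := iterate_le_of_parent_le hp s (p t)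
  omega

structure IsTreeWalk (p e x : ℕ → ℕ) (m : ℕ) : Prop where
  parent_le : ∀ t, p t ≤ t
  parent_lt : ∀ l ∈ Icc 1 m, p (e l) < e l
  step : ∀ l ∈ Icc 1 m,
    (x (l - 1) = p (e l) ∧ x l = e l) ∨ (x (l - 1) = e l ∧ x l = p (e l))

namespace IsTreeWalk

variable {p e x : ℕ → ℕ} {m : ℕ}

theorem depth_modEq (hw : IsTreeWalk p e x m) {l : ℕ} (hl : l ≤ m) :
    treeDepth p (x l) + l ≡ treeDepth p (x 0) [MOD 2] := by
  induction l with
  | zero => rfl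
  | succ l ih =>
    have hl' : l + 1 ∈ Icc 1 m := mem_Icc.mpr ⟨by omega, hl⟩
    have hd := treeDepth_eq_of_parent_lt (hw.parent_lt _ hl')
    refine Nat.ModEq.trans ?_ (ih (by omega))
    unfold Nat.ModEq
    rcases hw.step _ hl' with ⟨h₁, h₂⟩ | ⟨h₁, h₂⟩ <;>
      simp only [Nat.add_sub_cancel] at h₁ <;> rw [h₁, h₂] <;> omega

theorem ancRel_iff_of_label_ne (hw : IsTreeWalk p e x m) {t l : ℕ} (hl : l ∈ Icc 1 m)
    (ht : e l ≠ t) : ancRel p t (x l) ↔ ancRel p t (x (l - 1)) := by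
  rcases hw.step l hl with ⟨h₁, h₂⟩ | ⟨h₁, h₂⟩ <;> rw [h₁, h₂]
  · exact (ancRel_parent_iff ht).symm
  · exact ancRel_parent_iff ht

/-- `ancRel p t u` says that `u` lies below the edge above `t`; a stretch of the walk that does
not traverse this edge stays on one side of it. -/
theorem ancRel_iff_of_forall_label_ne (hw : IsTreeWalk p e x m) {t a c : ℕ} (hac : a ≤ c)
    (hcm : c ≤ m) (ht : ∀ l ∈ Ioc a c, e l ≠ t) : ancRel p t (x c) ↔ ancRel p t (x a) := by
  induction c, hac using Nat.le_induction with
  | base => rfl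
  | succ c hac ih =>
    rw [hw.ancRel_iff_of_label_ne (mem_Icc.mpr ⟨by omega, hcm⟩)
      (ht _ (mem_Ioc.mpr ⟨by omega, le_rfl⟩))]
    exact ih (by omega) fun l hl => ht l (Ioc_subset_Ioc_right (by omega) hl)

theorem eq_of_successive_labels (hw : IsTreeWalk p e x m) {i j : ℕ} (hi : i ∈ Icc 1 m)
    (hj : j ∈ Icc 1 m) (hij : i < j) (he : e j = e i)
    (hbetween : ∀ l ∈ Ioo i j, e l ≠ e i) : x (j - 1) = x i := by
  have hside := hw.ancRel_iff_of_forall_label_ne (a := i) (c := j - 1) (by omega)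
    (by have := (mem_Icc.mp hj).2; omega)
    fun l hl => hbetween l (by simp only [mem_Ioc, mem_Ioo] at hl ⊢; omega)
  have hlt := hw.parent_lt i hi
  have hfar := not_ancRel_parent hw.parent_le hlt
  have hnear : ancRel p (e i) (e i) := ⟨0, rfl⟩
  rcases hw.step i hi with ⟨-, hxi⟩ | ⟨-, hxi⟩ <;>
    rcases hw.step j hj with ⟨hxj, -⟩ | ⟨hxj, -⟩ <;>
    rw [he] at hxj <;> rw [hxi, hxj] at hside ⊢
  · exact absurd (hside.mpr hnear) hfar
  · exact absurd (hside.mp hnear) hfar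

theorem eq_label_iff_even (hw : IsTreeWalk p e x m) {t l : ℕ} (hl : l ∈ Icc 1 m)
    (he : e l = t) : x l = t ↔ Even (l + treeDepth p t + treeDepth p (x 0)) := by
  have hmod := hw.depth_modEq (mem_Icc.mp hl).2
  have hlt := hw.parent_lt l hl
  have hd := treeDepth_eq_of_parent_lt hlt
  unfold Nat.ModEq at hmod
  subst he
  rcases hw.step l hl with ⟨-, h⟩ | ⟨-, h⟩ <;> rw [h] at hmod ⊢ <;> rw [Nat.even_iff]
  · simp only [true_iff]; omega
  · simp only [hlt.ne, false_iff]; omega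

theorem eq_parent_label_iff_ne (hw : IsTreeWalk p e x m) {l : ℕ} (hl : l ∈ Icc 1 m) :
    x l = p (e l) ↔ x l ≠ e l := by
  have hlt := hw.parent_lt l hl
  rcases hw.step l hl with ⟨-, h⟩ | ⟨-, h⟩ <;> rw [h] <;> omega

theorem card_down_eq_card_up (hw : IsTreeWalk p e x m) {a c : ℕ} (hac : a ≤ c) (hcm : c ≤ m)
    (hx : x c = x a) (t : ℕ) :
    #{l ∈ Ioc a c | e l = t ∧ x l = t} = #{l ∈ Ioc a c | e l = t ∧ x l = p t} := by
  let f : ℕ → ℤ := fun l => if ancRel p t (x l) then 1 else 0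
  have htel : ∀ c', a ≤ c' → c' ≤ m →
      ∑ l ∈ Ioc a c', ((if e l = t ∧ x l = t then 1 else 0) -
        (if e l = t ∧ x l = p t then 1 else 0) : ℤ) = f c' - f a := by
    intro c' hac' hc'm
    induction c', hac' using Nat.le_induction with
    | base => simp
    | succ c' hac' ih =>
      have hl : c' + 1 ∈ Icc 1 m := mem_Icc.mpr ⟨by omega, hc'm⟩
      rw [sum_Ioc_succ_top hac', ih (by omega)]
      by_cases he : e (c' + 1) = t
      · have hlt := hw.parent_lt _ hl
        have hfar := not_ancRel_parent hw.parent_le hlt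
        rcases hw.step _ hl with ⟨h₁, h₂⟩ | ⟨h₁, h₂⟩ <;>
          simp only [Nat.add_sub_cancel] at h₁ <;> subst he <;>
          simp [f, h₁, h₂, hfar, hlt.ne, hlt.ne',
            show ancRel p (e (c' + 1)) (e (c' + 1)) from ⟨0, rfl⟩] <;>
          ring
      · have hside := hw.ancRel_iff_of_label_ne hl he
        simp only [Nat.add_sub_cancel] at hside
        simp [f, he, hside]
  have h := htel c hac hcm
  simp only [f, hx, sub_self] at h
  rw [sum_sub_distrib, sum_boole, sum_boole, sub_eq_zero] at h
  exact_mod_cast h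

theorem card_odd_eq_card_even (hw : IsTreeWalk p e x m) {a c : ℕ} (hac : a ≤ c) (hcm : c ≤ m)
    (hx : x c = x a) (t : ℕ) :
    #{l ∈ Ioc a c | e l = t ∧ Odd l} = #{l ∈ Ioc a c | e l = t ∧ Even l} := by
  have hcross := hw.card_down_eq_card_up hac hcm hx t
  have hl : ∀ l ∈ Ioc a c, l ∈ Icc 1 m := fun l hl => by
    simp only [mem_Ioc, mem_Icc] at hl ⊢; omega
  have hdown : ∀ l ∈ Ioc a c, e l = t →
      (x l = t ↔ Even (l + treeDepth p t + treeDepth p (x 0))) :=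
    fun l hl' he => hw.eq_label_iff_even (hl l hl') he
  have hup : ∀ l ∈ Ioc a c, e l = t →
      (x l = p t ↔ ¬ Even (l + treeDepth p t + treeDepth p (x 0))) := fun l hl' he => by
    rw [← hdown l hl' he, ← he]; exact hw.eq_parent_label_iff_ne (hl l hl')
  rw [filter_congr (fun l hl' => and_congr_right (hdown l hl')),
    filter_congr (fun l hl' => and_congr_right (hup l hl'))] at hcross
  rcases Nat.even_or_odd (treeDepth p t + treeDepth p (x 0)) with hD | hD <;>
    simp only [add_assoc, Nat.even_add, ← Nat.not_even_iff_odd] at hD hcross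
  · simp only [hD, iff_true, ← Nat.not_even_iff_odd] at hcross ⊢
    exact hcross.symm
  · simp only [hD, iff_false, not_not, ← Nat.not_even_iff_odd] at hcross ⊢
    exact hcross

theorem lt_of_label_lt (hw : IsTreeWalk p e x m) {t l : ℕ} (hl : l ∈ Icc 1 m) (h : e l < t) :
    x (l - 1) < t ∧ x l < t := by
  have := hw.parent_lt l hl
  rcases hw.step l hl with ⟨h₁, h₂⟩ | ⟨h₁, h₂⟩ <;> rw [h₁, h₂] <;> omega

/-- The walk is at `t` only at positions of one parity, so entering `t` at step `a` and being
away from it after step `c` forces `c - a` to be odd. -/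
theorem even_of_enter_exit (hw : IsTreeWalk p e x m) {a c : ℕ} (ha : a ∈ Icc 1 m)
    (hc : c ∈ Icc 1 m) (hac : a ≤ c) (he : e c = e a) (hin : x (a - 1) ≠ e a)
    (hout : x c ≠ e c) : Even (c + 1 - a) := by
  have hxa : x a = e a := by
    rcases hw.step a ha with ⟨-, h⟩ | ⟨h, -⟩
    · exact h
    · exact absurd h hin
  have hpa := (hw.eq_label_iff_even ha rfl).mp hxa
  have hpc := (hw.eq_label_iff_even hc he).not.mp (he ▸ hout)
  rw [Nat.even_iff] at hpa hpc ⊢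
  omega

end IsTreeWalk

theorem exists_run_start {B : Finset ℕ} (h0 : 0 ∉ B) {y : ℕ} (hy : y ∈ B) :
    ∃ a ≤ y, Icc a y ⊆ B ∧ a - 1 ∉ B := by
  induction y with
  | zero => exact absurd hy h0
  | succ y ih =>
    by_cases hy' : y ∈ B
    · obtain ⟨a, hay, hsub, ha⟩ := ih hy'
      refine ⟨a, by omega, fun z hz => ?_, ha⟩
      rcases (mem_Icc.mp hz).2.lt_or_eq with h | rfl
      · exact hsub (mem_Icc.mpr ⟨(mem_Icc.mp hz).1, by omega⟩)
      · exact hy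
    · exact ⟨y + 1, le_rfl, by simpa using hy, by simpa using hy'⟩

theorem exists_run_end {B : Finset ℕ} {y : ℕ} (hy : y ∈ B) :
    ∃ c ≥ y, Icc y c ⊆ B ∧ c + 1 ∉ B := by
  by_contra! h
  have hall : ∀ r, Icc y (y + r) ⊆ B := by
    intro r
    induction r with
    | zero => simpa using hy
    | succ r ih =>
      intro z hz
      rcases (mem_Icc.mp hz).2.lt_or_eq with hlt | rfl
      · exact ih (mem_Icc.mpr ⟨(mem_Icc.mp hz).1, by omega⟩)
      · exact h (y + r) (by omega) ih
  have hmem := hall (B.sup id + 1) (mem_Icc.mpr ⟨by omega, le_rfl⟩)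
  have := le_sup (f := id) hmem
  simp only [id] at this
  omega

theorem isEvenIntervalUnion_of_even_runs {B : Finset ℕ} (h0 : 0 ∉ B)
    (hrun : ∀ a c, a ≤ c → Icc a c ⊆ B → a - 1 ∉ B → c + 1 ∉ B → Even (c + 1 - a)) :
    IsEvenIntervalUnion B := by
  set S := (B ×ˢ B).filter
    fun q : ℕ × ℕ => q.1 ≤ q.2 ∧ Icc q.1 q.2 ⊆ B ∧ q.1 - 1 ∉ B ∧ q.2 + 1 ∉ B
  have hS : ∀ {q}, q ∈ S → q.1 ≤ q.2 ∧ Icc q.1 q.2 ⊆ B ∧ q.1 - 1 ∉ B ∧ q.2 + 1 ∉ B :=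
    fun hq => (mem_filter.mp hq).2
  have hinside : ∀ {q q'}, q ∈ S → q' ∈ S → ∀ y ∈ Icc q.1 q.2, y ∈ Icc q'.1 q'.2 →
      q'.1 ≤ q.1 ∧ q.2 ≤ q'.2 := by
    intro q q' hq hq' y hy hy'
    obtain ⟨-, hsub, hstart, hend⟩ := hS hq
    simp only [mem_Icc] at hy hy'
    constructor
    · by_contra! hlt
      exact (hS hq').2.2.1 (hsub (mem_Icc.mpr ⟨by omega, by omega⟩))
    · by_contra! hlt
      exact (hS hq').2.2.2 (hsub (mem_Icc.mpr ⟨by omega, by omega⟩))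
  refine ⟨S, fun q hq => ?_, fun q hq q' hq' hne => ?_, ?_⟩
  · obtain ⟨hle, hsub, hstart, hend⟩ := hS hq
    rw [Nat.card_Icc]
    exact ⟨hle, hrun _ _ hle hsub hstart hend⟩
  · refine disjoint_left.mpr fun y hy hy' => hne ?_
    have h₁ := hinside hq hq' y hy hy'
    have h₂ := hinside hq' hq y hy' hy
    exact Prod.ext (by omega) (by omega)
  · ext y
    simp only [Finset.mem_sup]
    constructor
    · intro hy
      obtain ⟨a, hay, hsa, ha⟩ := exists_run_start h0 hy
      obtain ⟨c, hyc, hsc, hc⟩ := exists_run_end hy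
      have hsub : Icc a c ⊆ B := fun z hz => by
        rcases le_total z y with h | h
        · exact hsa (mem_Icc.mpr ⟨(mem_Icc.mp hz).1, h⟩)
        · exact hsc (mem_Icc.mpr ⟨h, (mem_Icc.mp hz).2⟩)
      refine ⟨(a, c), mem_filter.mpr ⟨mem_product.mpr ⟨?_, ?_⟩, by omega, hsub, ha, hc⟩, ?_⟩
      · exact hsub (mem_Icc.mpr ⟨le_rfl, by omega⟩)
      · exact hsub (mem_Icc.mpr ⟨by omega, le_rfl⟩)
      · exact mem_Icc.mpr ⟨hay, hyc⟩
    · rintro ⟨q, hq, hy⟩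
      exact (hS hq).2.1 hy

section Word

variable {m : ℕ} {P : Finset (Finset ℕ)}

theorem partOf_eq_of_mem (hP : IsPartitionOf m P) {B : Finset ℕ} (hB : B ∈ P) {i : ℕ}
    (hi : i ∈ B) : partOf P i = B := by
  have : P.filter (fun C => i ∈ C) = {B} := by
    ext C
    simp only [mem_filter, mem_singleton]
    refine ⟨fun ⟨hC, hiC⟩ => ?_, by rintro rfl; exact ⟨hB, hi⟩⟩
    by_contra hne
    exact disjoint_left.mp (hP.2.2.1 C hC B hB hne) hiC hi
  rw [partOf, this, sup_singleton, id]

theorem partOf_mem (hP : IsPartitionOf m P) {i : ℕ} (hi : i ∈ Icc 1 m) : partOf P i ∈ P := by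
  obtain ⟨B, hB, hiB⟩ := hP.2.2.2 i hi
  rwa [partOf_eq_of_mem hP hB hiB]

theorem mem_partOf (hP : IsPartitionOf m P) {i : ℕ} (hi : i ∈ Icc 1 m) : i ∈ partOf P i := by
  obtain ⟨B, hB, hiB⟩ := hP.2.2.2 i hi
  rwa [partOf_eq_of_mem hP hB hiB]

noncomputable def firstOcc (P : Finset (Finset ℕ)) (l : ℕ) : ℕ := sInf (partOf P l : Set ℕ)

variable {l : ℕ}

theorem firstOcc_mem (hP : IsPartitionOf m P) (hl : l ∈ Icc 1 m) : firstOcc P l ∈ partOf P l :=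
  Nat.sInf_mem ⟨l, mem_partOf hP hl⟩

theorem firstOcc_le (hP : IsPartitionOf m P) (hl : l ∈ Icc 1 m) : firstOcc P l ≤ l :=
  Nat.sInf_le (mem_partOf hP hl)

theorem firstOcc_mem_Icc (hP : IsPartitionOf m P) (hl : l ∈ Icc 1 m) : firstOcc P l ∈ Icc 1 m :=
  hP.2.1 _ (partOf_mem hP hl) (firstOcc_mem hP hl)

theorem partOf_firstOcc (hP : IsPartitionOf m P) (hl : l ∈ Icc 1 m) :
    partOf P (firstOcc P l) = partOf P l :=
  partOf_eq_of_mem hP (partOf_mem hP hl) (firstOcc_mem hP hl)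

theorem firstOcc_eq_iff (hP : IsPartitionOf m P) {i j : ℕ} (hi : i ∈ Icc 1 m) (hj : j ∈ Icc 1 m) :
    firstOcc P i = firstOcc P j ↔ partOf P i = partOf P j := by
  refine ⟨fun h => ?_, fun h => by rw [firstOcc, h, firstOcc]⟩
  rw [← partOf_firstOcc hP hi, h, partOf_firstOcc hP hj]

theorem mem_iff_firstOcc_eq (hP : IsPartitionOf m P) {B : Finset ℕ} (hB : B ∈ P)
    (hl : l ∈ Icc 1 m) : l ∈ B ↔ firstOcc P l = sInf (B : Set ℕ) := by
  refine ⟨fun h => by rw [firstOcc, partOf_eq_of_mem hP hB h], fun h => ?_⟩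
  have hmin : sInf (B : Set ℕ) ∈ B := Nat.sInf_mem (hP.1 B hB)
  rw [← partOf_eq_of_mem hP hB hmin, ← h, partOf_firstOcc hP hl]
  exact mem_partOf hP hl

theorem firstOcc_lt_of_isLast (hP : IsPartitionOf m P) {B : Finset ℕ} (hB : B ∈ P)
    (hlast : ∀ B' ∈ P, B' ≠ B → ∃ a ∈ B', ∀ c ∈ B, a < c) (hl : l ∈ Icc 1 m) (hlB : l ∉ B) :
    firstOcc P l < sInf (B : Set ℕ) := by
  obtain ⟨a, ha, hlt⟩ := hlast _ (partOf_mem hP hl) fun h => hlB (h ▸ mem_partOf hP hl)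
  exact (Nat.sInf_le ha).trans_lt (hlt _ (Nat.sInf_mem (hP.1 B hB)))

theorem filter_between_eq_filter_firstOcc (hP : IsPartitionOf m P) {B : Finset ℕ} (hB : B ∈ P)
    {i j : ℕ} (hi : 1 ≤ i) (hj : j ≤ m) (q : ℕ → Prop) [DecidablePred q] :
    B.filter (fun l => i < l ∧ l < j ∧ q l) =
      (Ioc i (j - 1)).filter (fun l => firstOcc P l = sInf (B : Set ℕ) ∧ q l) := by
  ext l
  simp only [mem_filter, mem_Ioc]
  constructor
  · rintro ⟨hlB, hil, hlj, hq⟩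
    exact ⟨⟨hil, by omega⟩, (mem_iff_firstOcc_eq hP hB (hP.2.1 B hB hlB)).mp hlB, hq⟩
  · rintro ⟨⟨hil, hlj⟩, hfl, hq⟩
    have hlI : l ∈ Icc 1 m := mem_Icc.mpr ⟨by omega, by omega⟩
    exact ⟨(mem_iff_firstOcc_eq hP hB hlI).mpr hfl, hil, by omega, hq⟩

/-- The positions `0` and `i_1, …, i_b` whose circuit values generate all the others. -/
noncomputable def genVertices (m : ℕ) (P : Finset (Finset ℕ)) : Finset ℕ :=
  insert 0 ((Icc 1 m).image (firstOcc P))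

theorem le_of_mem_genVertices (hP : IsPartitionOf m P) {t : ℕ} (ht : t ∈ genVertices m P) :
    t ≤ m := by
  rcases mem_insert.mp ht with rfl | ht
  · exact Nat.zero_le m
  · obtain ⟨l, hl, rfl⟩ := mem_image.mp ht
    exact (mem_Icc.mp (firstOcc_mem_Icc hP hl)).2

theorem card_genVertices_le (hP : IsPartitionOf m P) : #(genVertices m P) ≤ #P + 1 := by
  have hsub : (Icc 1 m).image (firstOcc P) ⊆ P.image fun B : Finset ℕ => sInf (B : Set ℕ) := by
    intro t ht
    obtain ⟨l, hl, rfl⟩ := mem_image.mp ht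
    exact mem_image_of_mem _ (partOf_mem hP hl)
  calc #(genVertices m P) ≤ #((Icc 1 m).image (firstOcc P)) + 1 := card_insert_le _ _
    _ ≤ #P + 1 := Nat.add_le_add_right ((card_le_card hsub).trans card_image_le) 1

end Word

theorem Finset.pair_eq_pair_iff {α : Type*} [DecidableEq α] {a b c d : α} :
    ({a, b} : Finset α) = {c, d} ↔ a = c ∧ b = d ∨ a = d ∧ b = c := by
  rw [← coe_inj, coe_pair, coe_pair, Set.pair_eq_pair_iff]

section Circuit

variable {m n : ℕ} {P : Finset (Finset ℕ)} {v : Fin (m + 1) → Fin n}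

theorem extFin_val (v : Fin (m + 1) → Fin n) (a : Fin (m + 1)) : extFin v a = v a :=
  congrArg v (Fin.ext (Nat.mod_eq_of_lt a.isLt))

theorem extFin_last_of_mem_circuitsOf (hv : v ∈ circuitsOf m P n) : extFin v m = extFin v 0 := by
  simp only [circuitsOf, mem_filter] at hv
  exact hv.2.1

theorem edge_eq_of_mem_circuitsOf (hv : v ∈ circuitsOf m P n) {i j : ℕ} (hi : i ∈ Icc 1 m)
    (hj : j ∈ Icc 1 m) (h : partOf P i = partOf P j) :
    ({extFin v (i - 1), extFin v i} : Finset (Fin n)) = {extFin v (j - 1), extFin v j} := by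
  simp only [circuitsOf, mem_filter] at hv
  exact (hv.2.2 i hi j hj).mp h

theorem exists_mem_genVertices_extFin_eq (hP : IsPartitionOf m P) (hv : v ∈ circuitsOf m P n)
    {l : ℕ} (hl : l ≤ m) : ∃ t ∈ genVertices m P, t ≤ l ∧ extFin v t = extFin v l := by
  induction l using Nat.strong_induction_on with
  | _ l ih =>
  rcases Nat.eq_zero_or_pos l with rfl | hl0
  · exact ⟨0, mem_insert_self _ _, le_rfl, rfl⟩
  have hlI : l ∈ Icc 1 m := mem_Icc.mpr ⟨hl0, hl⟩
  have hf := firstOcc_mem_Icc hP hlI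
  have hfl := firstOcc_le hP hlI
  have hedge := edge_eq_of_mem_circuitsOf hv hlI hf (partOf_firstOcc hP hlI).symm
  have hVl : extFin v l ∈ ({extFin v (firstOcc P l - 1), extFin v (firstOcc P l)} : Finset _) :=
    hedge ▸ by simp
  rcases mem_insert.mp hVl with h | h
  · obtain ⟨t, ht, htle, hVt⟩ := ih (firstOcc P l - 1) (by grind) (by omega)
    exact ⟨t, ht, by omega, hVt.trans h.symm⟩
  · exact ⟨_, mem_insert_of_mem (mem_image_of_mem _ hlI), hfl, (mem_singleton.mp h).symm⟩

theorem image_subset_image_genVertices (hP : IsPartitionOf m P) (hv : v ∈ circuitsOf m P n) :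
    univ.image v ⊆ (genVertices m P).image (extFin v) := by
  intro y hy
  obtain ⟨a, -, rfl⟩ := mem_image.mp hy
  obtain ⟨t, ht, -, hVt⟩ := exists_mem_genVertices_extFin_eq hP hv (Nat.lt_succ_iff.mp a.isLt)
  exact mem_image.mpr ⟨t, ht, hVt.trans (extFin_val v a)⟩

theorem card_image_le_of_mem_circuitsOf (hP : IsPartitionOf m P) (hv : v ∈ circuitsOf m P n) :
    #(univ.image v) ≤ #P + 1 :=
  (card_le_card (image_subset_image_genVertices hP hv)).trans
    (card_image_le.trans (card_genVertices_le hP))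

theorem injOn_extFin_genVertices (hP : IsPartitionOf m P) (hv : v ∈ circuitsOf m P n)
    (hcard : #(univ.image v) = #P + 1) : Set.InjOn (extFin v) (genVertices m P) := by
  refine injOn_of_card_image_eq (le_antisymm card_image_le ?_)
  calc #(genVertices m P) ≤ #P + 1 := card_genVertices_le hP
    _ = #(univ.image v) := hcard.symm
    _ ≤ _ := card_le_card (image_subset_image_genVertices hP hv)

/-- The circuit `v` read on its generating positions: position `l` is replaced by the least
generating position carrying the same value. -/
noncomputable def circuitWalk (m : ℕ) (P : Finset (Finset ℕ)) (v : Fin (m + 1) → Fin n)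
    (l : ℕ) : ℕ :=
  sInf {t | t ∈ genVertices m P ∧ extFin v t = extFin v l}

theorem circuitWalk_congr {l l' : ℕ} (h : extFin v l = extFin v l') :
    circuitWalk m P v l = circuitWalk m P v l' := by
  rw [circuitWalk, h, circuitWalk]

theorem circuitWalk_spec (hP : IsPartitionOf m P) (hv : v ∈ circuitsOf m P n) {l : ℕ}
    (hl : l ≤ m) : circuitWalk m P v l ∈ genVertices m P ∧
      extFin v (circuitWalk m P v l) = extFin v l ∧ circuitWalk m P v l ≤ l := by
  obtain ⟨t, ht, htl, hVt⟩ := exists_mem_genVertices_extFin_eq hP hv hl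
  have hmem : t ∈ {t | t ∈ genVertices m P ∧ extFin v t = extFin v l} := ⟨ht, hVt⟩
  exact ⟨(Nat.sInf_mem ⟨t, hmem⟩).1, (Nat.sInf_mem ⟨t, hmem⟩).2, (Nat.sInf_le hmem).trans htl⟩

theorem circuitWalk_le (hP : IsPartitionOf m P) (l : ℕ) : circuitWalk m P v l ≤ m := by
  rcases Set.eq_empty_or_nonempty {t | t ∈ genVertices m P ∧ extFin v t = extFin v l} with h | h
  · rw [circuitWalk, h, Nat.sInf_empty]; exact Nat.zero_le m
  · exact le_of_mem_genVertices hP (Nat.sInf_mem h).1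

theorem circuitWalk_of_mem (hP : IsPartitionOf m P) (hv : v ∈ circuitsOf m P n)
    (hinj : Set.InjOn (extFin v) (genVertices m P)) {t : ℕ} (ht : t ∈ genVertices m P) :
    circuitWalk m P v t = t :=
  have h := circuitWalk_spec hP hv (le_of_mem_genVertices hP ht)
  hinj h.1 ht h.2.1

theorem circuitWalk_zero : circuitWalk m P v 0 = 0 :=
  Nat.eq_zero_of_le_zero (Nat.sInf_le ⟨mem_insert_self _ _, rfl⟩)

theorem isTreeWalk_circuitWalk (hP : IsPartitionOf m P) (hv : v ∈ circuitsOf m P n)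
    (hinj : Set.InjOn (extFin v) (genVertices m P)) :
    IsTreeWalk (fun t => circuitWalk m P v (t - 1)) (firstOcc P) (circuitWalk m P v) m where
  parent_le t := by
    rcases le_or_gt (t - 1) m with h | h
    · exact (circuitWalk_spec hP hv h).2.2.trans (Nat.sub_le t 1)
    · exact (circuitWalk_le hP _).trans (by omega)
  parent_lt l hl := by
    have hf := mem_Icc.mp (firstOcc_mem_Icc hP hl)
    exact (circuitWalk_spec hP hv (by omega)).2.2.trans_lt (by omega)
  step l hl := by
    have hf := firstOcc_mem_Icc hP hl
    have hq := circuitWalk_spec hP hv (l := firstOcc P l - 1) (by grind)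
    have hfT : firstOcc P l ∈ genVertices m P := mem_insert_of_mem (mem_image_of_mem _ hl)
    have hedge := edge_eq_of_mem_circuitsOf hv hl hf (partOf_firstOcc hP hl).symm
    rw [← hq.2.1, Finset.pair_eq_pair_iff] at hedge
    rcases hedge with ⟨h₁, h₂⟩ | ⟨h₁, h₂⟩ <;>
      simp only [circuitWalk_congr h₁, circuitWalk_congr h₂, circuitWalk_of_mem hP hv hinj hq.1,
        circuitWalk_of_mem hP hv hinj hfT, and_self, true_or, or_true]

end Circuit

section FullCircuit

variable {m n : ℕ} {P : Finset (Finset ℕ)} {v : Fin (m + 1) → Fin n}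

theorem extFin_eq_of_successive (hP : IsPartitionOf m P) (hv : v ∈ circuitsOf m P n)
    (hcard : #(univ.image v) = #P + 1) {i j : ℕ} (hi : i ∈ Icc 1 m) (hj : j ∈ Icc 1 m)
    (hij : i < j) (hpart : partOf P i = partOf P j)
    (hbetween : ∀ l ∈ Icc 1 m, i < l → l < j → partOf P l ≠ partOf P i) :
    extFin v (i - 1) = extFin v j ∧ extFin v i = extFin v (j - 1) := by
  have hw := isTreeWalk_circuitWalk hP hv (injOn_extFin_genVertices hP hv hcard)
  have hx : circuitWalk m P v (j - 1) = circuitWalk m P v i := by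
    refine hw.eq_of_successive_labels hi hj hij ((firstOcc_eq_iff hP hj hi).mpr hpart.symm)
      fun l hl => ?_
    obtain ⟨hil, hlj⟩ := mem_Ioo.mp hl
    have hlI : l ∈ Icc 1 m := mem_Icc.mpr ⟨by grind, by grind⟩
    rw [Ne, firstOcc_eq_iff hP hlI hi]
    exact hbetween l hlI hil hlj
  have hVj : extFin v (j - 1) = extFin v i := by
    rw [← (circuitWalk_spec hP hv (by grind)).2.1, hx, (circuitWalk_spec hP hv (by grind)).2.1]
  have hVi : extFin v (i - 1) ≠ extFin v i := fun h => by
    have hxi := circuitWalk_congr (m := m) (P := P) h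
    have hlt := hw.parent_lt i hi
    rcases hw.step i hi with ⟨h₁, h₂⟩ | ⟨h₁, h₂⟩ <;> rw [h₁, h₂] at hxi <;> omega
  rcases Finset.pair_eq_pair_iff.mp (edge_eq_of_mem_circuitsOf hv hi hj hpart) with ⟨h₁, -⟩ | h
  · exact absurd (h₁.trans hVj) hVi
  · exact h

theorem card_odd_eq_card_even_of_successive (hP : IsPartitionOf m P) (hv : v ∈ circuitsOf m P n)
    (hcard : #(univ.image v) = #P + 1) {B : Finset ℕ} (hB : B ∈ P) {i j : ℕ} (hi : i ∈ B)
    (hj : j ∈ B) (hij : i < j) (hgap : ∀ l ∈ B, ¬(i < l ∧ l < j)) {B' : Finset ℕ}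
    (hB' : B' ∈ P) :
    #(B'.filter fun l => i < l ∧ l < j ∧ Odd l) = #(B'.filter fun l => i < l ∧ l < j ∧ Even l) := by
  have hiI := hP.2.1 B hB hi
  have hjI := hP.2.1 B hB hj
  have hpi := partOf_eq_of_mem hP hB hi
  have hC2 := extFin_eq_of_successive hP hv hcard hiI hjI hij
    (by rw [hpi, partOf_eq_of_mem hP hB hj])
    fun l hl hil hlj h => hgap l (hpi ▸ h ▸ mem_partOf hP hl) ⟨hil, hlj⟩
  rw [filter_between_eq_filter_firstOcc hP hB' (mem_Icc.mp hiI).1 (mem_Icc.mp hjI).2,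
    filter_between_eq_filter_firstOcc hP hB' (mem_Icc.mp hiI).1 (mem_Icc.mp hjI).2]
  exact (isTreeWalk_circuitWalk hP hv (injOn_extFin_genVertices hP hv hcard)).card_odd_eq_card_even
    (by omega) (by grind) (circuitWalk_congr hC2.2.symm) _

theorem isEvenIntervalUnion_of_isLast (hP : IsPartitionOf m P) (hv : v ∈ circuitsOf m P n)
    (hcard : #(univ.image v) = #P + 1) {B : Finset ℕ} (hB : B ∈ P)
    (hlast : ∀ B' ∈ P, B' ≠ B → ∃ a ∈ B', ∀ c ∈ B, a < c) : IsEvenIntervalUnion B := by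
  have hw := isTreeWalk_circuitWalk hP hv (injOn_extFin_genVertices hP hv hcard)
  set x := circuitWalk m P v
  set tz := sInf (B : Set ℕ)
  have hBI : B ⊆ Icc 1 m := hP.2.1 B hB
  have htz : 1 ≤ tz := (mem_Icc.mp (hBI (Nat.sInf_mem (hP.1 B hB)))).1
  -- The last letter's edge hangs from the leaf `tz`: steps with other letters never visit it.
  have hoff : ∀ l ∈ Icc 1 m, l ∉ B → x (l - 1) < tz ∧ x l < tz := fun l hl hlB =>
    hw.lt_of_label_lt hl (firstOcc_lt_of_isLast hP hB hlast hl hlB)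
  have hx0 : x 0 = 0 := circuitWalk_zero
  have hxm : x m = 0 := (circuitWalk_congr (extFin_last_of_mem_circuitsOf hv)).trans hx0
  refine isEvenIntervalUnion_of_even_runs (fun h0 => by simpa using hBI h0)
    fun a c hac hsub ha hc => ?_
  have hlab : ∀ l ∈ Icc a c, firstOcc P l = tz := fun l hl =>
    (mem_iff_firstOcc_eq hP hB (hBI (hsub hl))).mp (hsub hl)
  have haI := hBI (hsub (mem_Icc.mpr ⟨le_rfl, hac⟩))
  have hcI := hBI (hsub (mem_Icc.mpr ⟨hac, le_rfl⟩))
  refine hw.even_of_enter_exit haI hcI hac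
    ((hlab c (mem_Icc.mpr ⟨hac, le_rfl⟩)).trans (hlab a (mem_Icc.mpr ⟨le_rfl, hac⟩)).symm) ?_ ?_
  · rw [hlab a (mem_Icc.mpr ⟨le_rfl, hac⟩)]
    by_cases ha1 : a = 1
    · rw [ha1, Nat.sub_self, hx0]; omega
    · exact (hoff (a - 1) (mem_Icc.mpr ⟨by grind, by grind⟩) ha).2.ne
  · rw [hlab c (mem_Icc.mpr ⟨hac, le_rfl⟩)]
    by_cases hcm : c = m
    · rw [hcm, hxm]; omega
    · simpa using (hoff (c + 1) (mem_Icc.mpr ⟨by omega, by grind⟩) hc).1.ne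

end FullCircuit

theorem card_filter_card_image_le {α β : Type*} [Fintype α] [DecidableEq α] [Nonempty α]
    [Fintype β] [DecidableEq β] (b : ℕ) :
    #(univ.filter fun f : α → β => #(univ.image f) ≤ b) ≤
      Fintype.card β ^ b * b ^ Fintype.card α := by
  have hsub : (univ.filter fun f : α → β => #(univ.image f) ≤ b) ⊆
      (univ : Finset ((Fin b → β) × (α → Fin b))).image fun gh => gh.1 ∘ gh.2 := by
    intro f hf
    have hle : Fintype.card (univ.image f) ≤ Fintype.card (Fin b) := by
      rw [Fintype.card_coe, Fintype.card_fin]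
      exact (mem_filter.mp hf).2
    obtain ⟨e⟩ := Function.Embedding.nonempty_of_card_le hle
    refine mem_image.mpr ⟨(Function.extend e Subtype.val fun _ => f (Classical.arbitrary α),
      fun a => e ⟨f a, mem_image_of_mem f (mem_univ a)⟩), mem_univ _, funext fun a => ?_⟩
    dsimp only [Function.comp_apply]
    exact e.injective.extend_apply Subtype.val _ _
  calc _ ≤ _ := card_le_card hsub
    _ ≤ _ := card_image_le
    _ = _ := by simp

theorem exists_mem_circuitsOf_card_image_eq {m : ℕ} {P : Finset (Finset ℕ)}
    (hP : IsPartitionOf m P)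
    (hlim : Tendsto (fun n : ℕ => (#(circuitsOf m P n) : ℝ) / (n : ℝ) ^ (#P + 1)) atTop (𝓝 1)) :
    ∃ n, ∃ v ∈ circuitsOf m P n, #(univ.image v) = #P + 1 := by
  by_contra! hnone
  have hbound : ∀ n : ℕ, 0 < n →
      (#(circuitsOf m P n) : ℝ) / (n : ℝ) ^ (#P + 1) ≤ (#P : ℝ) ^ (m + 1) / n := by
    intro n hn
    have hsub : circuitsOf m P n ⊆
        univ.filter fun v : Fin (m + 1) → Fin n => #(univ.image v) ≤ #P := fun v hv =>
      mem_filter.mpr ⟨mem_univ _, by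
        have := card_image_le_of_mem_circuitsOf hP hv; have := hnone n v hv; omega⟩
    have hcount : (#(circuitsOf m P n) : ℝ) ≤ (n : ℝ) ^ #P * (#P : ℝ) ^ (m + 1) := by
      have := (card_le_card hsub).trans
        (card_filter_card_image_le (α := Fin (m + 1)) (β := Fin n) #P)
      simp only [Fintype.card_fin] at this
      exact_mod_cast this
    rw [div_le_div_iff₀ (by positivity) (by positivity)]
    calc _ ≤ (n : ℝ) ^ #P * (#P : ℝ) ^ (m + 1) * n := by gcongr
      _ = _ := by ring
  have hzero : Tendsto (fun n : ℕ => (#(circuitsOf m P n) : ℝ) / (n : ℝ) ^ (#P + 1)) atTop (𝓝 0) :=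
    squeeze_zero' (Eventually.of_forall fun n => by positivity)
      ((eventually_gt_atTop 0).mono hbound) (tendsto_const_div_atTop_nhds_zero_nat _)
  exact one_ne_zero (tendsto_nhds_unique hlim hzero)

theorem even_card_of_card_filter_odd_eq {s : Finset ℕ} (h : #(s.filter Odd) = #(s.filter Even)) :
    Even #s := by
  have hsplit := card_filter_add_card_filter_not (s := s) Odd
  simp only [Nat.not_odd_iff_even] at hsplit
  rw [← hsplit, h]
  exact ⟨_, rfl⟩

theorem word_with_full_circuit_count_is_special_symmetric_general
    (k b : ℕ) (P : Finset (Finset ℕ))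
    (hP : IsPartitionOf (2 * k) P) (hb : P.card = b)
    (hlim : Tendsto (fun n : ℕ => ((circuitsOf (2 * k) P n).card : ℝ) / (n : ℝ) ^ (b + 1))
      atTop (𝓝 1)) :
    (∀ B ∈ P, (∀ B' ∈ P, B' ≠ B → ∃ a ∈ B', ∀ c ∈ B, a < c) → IsEvenIntervalUnion B) ∧
    (∀ n : ℕ, ∀ v ∈ circuitsOf (2 * k) P n, (Finset.univ.image v).card = b + 1 →
      ∀ i ∈ Finset.Icc 1 (2 * k), ∀ j ∈ Finset.Icc 1 (2 * k), i < j →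
        partOf P i = partOf P j →
        (∀ l ∈ Finset.Icc 1 (2 * k), i < l → l < j → partOf P l ≠ partOf P i) →
        extFin v (i - 1) = extFin v j ∧ extFin v i = extFin v (j - 1)) ∧
    (∀ B ∈ P, ∀ i ∈ B, ∀ j ∈ B, i < j → (∀ l ∈ B, ¬(i < l ∧ l < j)) →
      ∀ B' ∈ P, B' ≠ B →
        (B'.filter fun l => i < l ∧ l < j ∧ Odd l).card
          = (B'.filter fun l => i < l ∧ l < j ∧ Even l).card) ∧
    IsSpecialSymmetric (2 * k) P := by
  subst hb
  obtain ⟨n, v, hv, hcard⟩ := exists_mem_circuitsOf_card_image_eq hP hlim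
  have hlast B (hB : B ∈ P) := isEvenIntervalUnion_of_isLast hP hv hcard hB
  have hbalance B (hB : B ∈ P) i (hi : i ∈ B) j (hj : j ∈ B) (hij : i < j) hgap B'
      (hB' : B' ∈ P) := card_odd_eq_card_even_of_successive hP hv hcard hB hi hj hij hgap hB'
  refine ⟨hlast, fun n v hv hcard i hi j hj hij => extFin_eq_of_successive hP hv hcard hi hj hij,
    fun B hB i hi j hj hij hgap B' hB' _ => hbalance B hB i hi j hj hij hgap B' hB', hP, hlast,
    fun B hB i hi j hj hij hgap B' hB' _ => ⟨?_, hbalance B hB i hi j hj hij hgap B' hB'⟩⟩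
  apply even_card_of_card_filter_odd_eq
  simpa only [filter_filter, and_assoc] using hbalance B hB i hi j hj hij hgap B' hB'

/-- **Lemma.** If a word `ω` of length `2k` with `b` distinct letters satisfies
`|Π(ω)|/n^{b+1} → 1`, then (i) the last new letter appears only in pure blocks of even
sizes, (ii) in circuits with `b+1` distinct vertex values, successive occurrences of the
same letter satisfy the `(C2)` constraint, and (iii) between successive occurrences of any
letter every other letter appears equally often in odd and in even positions; consequently
`ω` is a special symmetric word. -/
theorem word_with_full_circuit_count_is_special_symmetric
    (k b : ℕ) (hk : 1 ≤ k) (P : Finset (Finset ℕ))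
    (hP : IsPartitionOf (2 * k) P) (hb : P.card = b)
    (hlim : Tendsto (fun n : ℕ => ((circuitsOf (2 * k) P n).card : ℝ) / (n : ℝ) ^ (b + 1))
      atTop (𝓝 1)) :
    (∀ B ∈ P, (∀ B' ∈ P, B' ≠ B → ∃ a ∈ B', ∀ c ∈ B, a < c) → IsEvenIntervalUnion B) ∧
    (∀ n : ℕ, ∀ v ∈ circuitsOf (2 * k) P n, (Finset.univ.image v).card = b + 1 →
      ∀ i ∈ Finset.Icc 1 (2 * k), ∀ j ∈ Finset.Icc 1 (2 * k), i < j →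
        partOf P i = partOf P j →
        (∀ l ∈ Finset.Icc 1 (2 * k), i < l → l < j → partOf P l ≠ partOf P i) →
        extFin v (i - 1) = extFin v j ∧ extFin v i = extFin v (j - 1)) ∧
    (∀ B ∈ P, ∀ i ∈ B, ∀ j ∈ B, i < j → (∀ l ∈ B, ¬(i < l ∧ l < j)) →
      ∀ B' ∈ P, B' ≠ B →
        (B'.filter fun l => i < l ∧ l < j ∧ Odd l).card
          = (B'.filter fun l => i < l ∧ l < j ∧ Even l).card) ∧
    IsSpecialSymmetric (2 * k) P :=
  word_with_full_circuit_count_is_special_symmetric_general k b P hP hb hlim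
end

section
/- Let A and B be n×n real symmetric matrices, and let μ_A and μ_B denote their empirical spectral distributions. Then d_2(μ_A, μ_B)² ≤ (1/n)·Tr((A − B)²), where d_2 is the L²-Wasserstein distance between probability measures on ℝ with finite second moment. -/
open MeasureTheory ProbabilityTheory Filter Finset
open scoped BigOperators ENNReal NNReal Topology Classical

/-!
This is the Hoffman–Wielandt inequality in disguise. Diagonalize `A = U diag(λ) Uᵀ` and
`B = V diag(μ) Vᵀ`; then `Tr(AB) = ∑ᵢⱼ λᵢ μⱼ Wᵢⱼ²` with `W = UᵀV` orthogonal, so `(Wᵢⱼ²)` is doubly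
stochastic. A linear functional on the Birkhoff polytope is maximized at a permutation matrix,
which gives a permutation `σ` with `∑ᵢ (λᵢ - μ_σ(i))² ≤ Tr((A - B)²)`. The coupling of `μ_A` and
`μ_B` putting mass `1/n` on each pair `(λᵢ, μ_σ(i))` then bounds `d₂(μ_A, μ_B)²`.
-/

open Matrix Equiv

section HoffmanWielandt

variable {ι : Type*} [Fintype ι] [DecidableEq ι]

theorem Matrix.trace_diagonal_mul_mul_diagonal_mul_transpose {R : Type*} [CommSemiring R]
    (d e : ι → R) (W : Matrix ι ι R) :
    (diagonal d * W * diagonal e * Wᵀ).trace = ∑ i, ∑ j, d i * e j * W i j ^ 2 := by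
  simp only [trace, diag_apply, mul_apply (M := diagonal d * W * diagonal e), mul_diagonal,
    diagonal_mul, transpose_apply]
  exact Fintype.sum_congr _ _ fun i => Fintype.sum_congr _ _ fun j => by ring

theorem Matrix.of_sq_mem_doublyStochastic {W : Matrix ι ι ℝ} (hW : W ∈ unitaryGroup ι ℝ) :
    of (fun i j => W i j ^ 2) ∈ doublyStochastic ℝ ι := by
  have hrow := congr_fun₂ (mem_unitaryGroup_iff.mp hW)
  have hcol := congr_fun₂ (mem_unitaryGroup_iff'.mp hW)
  simp only [mul_apply, star_apply, star_trivial] at hrow hcol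
  refine mem_doublyStochastic_iff_sum.mpr ⟨fun i j => sq_nonneg _, fun i => ?_, fun j => ?_⟩
  · simpa [sq] using hrow i i
  · simpa [sq] using hcol j j

theorem exists_perm_sum_mul_le_of_mem_doublyStochastic {R : Type*} [Field R] [LinearOrder R]
    [IsStrictOrderedRing R] {M : Matrix ι ι R} (hM : M ∈ doublyStochastic R ι)
    (c : ι → ι → R) : ∃ σ : Perm ι, ∑ i, ∑ j, c i j * M i j ≤ ∑ i, c i (σ i) := by
  let pairing : Matrix ι ι R →ₗ[R] R :=
    { toFun := fun N => ∑ i, ∑ j, c i j * N i j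
      map_add' := fun N N' => by simp only [Matrix.add_apply, mul_add, Finset.sum_add_distrib]
      map_smul' := fun r N => by
        simp only [Matrix.smul_apply, smul_eq_mul, Finset.mul_sum, RingHom.id_apply]
        exact Fintype.sum_congr _ _ fun i => Fintype.sum_congr _ _ fun j => by ring }
  rw [← SetLike.mem_coe, doublyStochastic_eq_convexHull_permMatrix] at hM
  obtain ⟨_, ⟨σ, rfl⟩, hσ⟩ :=
    (pairing.convexOn convex_univ).exists_ge_of_mem_convexHull (Set.subset_univ _) hM
  refine ⟨σ, hσ.trans_eq ?_⟩
  simp [pairing, Perm.permMatrix, PEquiv.toMatrix_apply, Equiv.toPEquiv_apply]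

namespace Matrix.IsHermitian

variable {A B : Matrix ι ι ℝ}

theorem eq_mul_diagonal_eigenvalues_mul_transpose (hA : A.IsHermitian) :
    A = (hA.eigenvectorUnitary : Matrix ι ι ℝ) * diagonal hA.eigenvalues *
      (hA.eigenvectorUnitary : Matrix ι ι ℝ)ᵀ := by
  conv_lhs => rw [hA.spectral_theorem]
  simp [star_eq_conjTranspose, conjTranspose_eq_transpose_of_trivial]

theorem trace_mul_eq_sum_eigenvalues (hA : A.IsHermitian) (hB : B.IsHermitian) :
    (A * B).trace = ∑ i, ∑ j, hA.eigenvalues i * hB.eigenvalues j *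
      ((hA.eigenvectorUnitary : Matrix ι ι ℝ)ᵀ * hB.eigenvectorUnitary) i j ^ 2 := by
  rw [← trace_diagonal_mul_mul_diagonal_mul_transpose, transpose_mul, transpose_transpose]
  conv_lhs => rw [hA.eq_mul_diagonal_eigenvalues_mul_transpose,
    hB.eq_mul_diagonal_eigenvalues_mul_transpose]
  simp only [Matrix.mul_assoc]
  rw [trace_mul_comm]
  simp only [Matrix.mul_assoc]

theorem trace_mul_self_eq_sum_sq_eigenvalues (hA : A.IsHermitian) :
    (A * A).trace = ∑ i, hA.eigenvalues i ^ 2 := by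
  have hU : (hA.eigenvectorUnitary : Matrix ι ι ℝ)ᵀ * hA.eigenvectorUnitary = 1 :=
    Unitary.coe_star_mul_self hA.eigenvectorUnitary
  simp [trace_mul_eq_sum_eigenvalues hA hA, hU, one_apply, sq]

theorem exists_perm_sum_sq_eigenvalues_sub_le (hA : A.IsHermitian) (hB : B.IsHermitian) :
    ∃ σ : Perm ι,
      ∑ i, (hA.eigenvalues i - hB.eigenvalues (σ i)) ^ 2 ≤ ((A - B) ^ 2).trace := by
  have hW : (hA.eigenvectorUnitary : Matrix ι ι ℝ)ᵀ * hB.eigenvectorUnitary ∈ unitaryGroup ι ℝ :=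
    mul_mem (Unitary.star_mem hA.eigenvectorUnitary.2) hB.eigenvectorUnitary.2
  obtain ⟨σ, hσ⟩ := exists_perm_sum_mul_le_of_mem_doublyStochastic
    (of_sq_mem_doublyStochastic hW) fun i j => hA.eigenvalues i * hB.eigenvalues j
  simp only [of_apply] at hσ
  rw [← trace_mul_eq_sum_eigenvalues hA hB] at hσ
  have hsq : ((A - B) ^ 2).trace = (A * A).trace - 2 * (A * B).trace + (B * B).trace := by
    rw [sq, sub_mul, mul_sub, mul_sub, trace_sub, trace_sub, trace_sub, trace_mul_comm B A]
    ring
  have hperm : ∑ i, hB.eigenvalues (σ i) ^ 2 = ∑ i, hB.eigenvalues i ^ 2 :=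
    Equiv.sum_comp σ (hB.eigenvalues · ^ 2)
  refine ⟨σ, ?_⟩
  rw [hsq, hA.trace_mul_self_eq_sum_sq_eigenvalues, hB.trace_mul_self_eq_sum_sq_eigenvalues,
    ← hperm]
  simp only [sub_sq, Finset.sum_add_distrib, Finset.sum_sub_distrib, ← Finset.mul_sum, mul_assoc]
  linarith

end Matrix.IsHermitian

end HoffmanWielandt

section EmpiricalMeasure

variable {α ι : Type*} [MeasurableSpace α] [Fintype ι]

noncomputable def empiricalMeasure (x : ι → α) : Measure α :=
  (Fintype.card ι : ℝ≥0∞)⁻¹ • ∑ i, Measure.dirac (x i)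

theorem esdOfMatrix_eq_empiricalMeasure {n : ℕ} {A : Matrix (Fin n) (Fin n) ℝ}
    (hA : A.IsHermitian) : esdOfMatrix A = empiricalMeasure hA.eigenvalues := by
  rw [esdOfMatrix, dif_pos hA, empiricalMeasure, Fintype.card_fin]

instance isProbabilityMeasure_empiricalMeasure [Nonempty ι] (x : ι → α) :
    IsProbabilityMeasure (empiricalMeasure x) := by
  constructor
  simp [empiricalMeasure, ENNReal.inv_mul_cancel]

theorem map_empiricalMeasure {β : Type*} [MeasurableSpace β] {f : α → β} (hf : Measurable f)
    (x : ι → α) : (empiricalMeasure x).map f = empiricalMeasure (f ∘ x) := by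
  rw [empiricalMeasure, Measure.map_smul, ← Measure.mapₗ_apply_of_measurable hf, map_sum]
  simp [Measure.mapₗ_apply_of_measurable hf, Measure.map_dirac' hf, empiricalMeasure]

theorem empiricalMeasure_comp_perm (x : ι → α) (σ : Perm ι) :
    empiricalMeasure (x ∘ σ) = empiricalMeasure x := by
  simp only [empiricalMeasure, Function.comp_apply, Equiv.sum_comp σ fun i => Measure.dirac (x i)]

variable [MeasurableSingletonClass α] {E : Type*} [NormedAddCommGroup E]

theorem integrable_empiricalMeasure [Nonempty ι] (f : α → E) (x : ι → α) :
    Integrable f (empiricalMeasure x) := by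
  refine Integrable.smul_measure ?_ (ENNReal.inv_ne_top.mpr ?_)
  · exact integrable_finsetSum_measure.mpr fun i _ => integrable_dirac enorm_lt_top
  exact_mod_cast Fintype.card_ne_zero

theorem integral_empiricalMeasure [NormedSpace ℝ E] [CompleteSpace E] (f : α → E) (x : ι → α) :
    ∫ a, f a ∂empiricalMeasure x = (Fintype.card ι : ℝ)⁻¹ • ∑ i, f (x i) := by
  rw [empiricalMeasure, integral_smul_measure,
    integral_finsetSum_measure fun i _ => integrable_dirac enorm_lt_top]
  simp

end EmpiricalMeasure

theorem d2sq_le_integral {μ ν : Measure ℝ} {ρ : Measure (ℝ × ℝ)} [IsProbabilityMeasure ρ]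
    (hfst : ρ.map Prod.fst = μ) (hsnd : ρ.map Prod.snd = ν)
    (hint : Integrable (fun q : ℝ × ℝ => (q.1 - q.2) ^ 2) ρ) :
    d2sq μ ν ≤ ∫ q : ℝ × ℝ, (q.1 - q.2) ^ 2 ∂ρ := by
  refine csInf_le ⟨0, ?_⟩ ⟨ρ, inferInstance, hfst, hsnd, hint, rfl⟩
  rintro _ ⟨ρ', -, -, -, -, rfl⟩
  exact integral_nonneg fun q => sq_nonneg _

theorem d2sq_zero_left (ν : Measure ℝ) : d2sq 0 ν = 0 := by
  rw [d2sq, ← Real.sInf_empty]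
  congr 1
  refine Set.eq_empty_of_forall_notMem ?_
  rintro _ ⟨ρ, hρ, hfst, -⟩
  have := (Measure.isProbabilityMeasure_map (μ := ρ) measurable_fst.aemeasurable).measure_univ
  simp [hfst] at this

theorem d2sq_empiricalMeasure_le {ι : Type*} [Fintype ι] [Nonempty ι] (x y : ι → ℝ)
    (σ : Perm ι) :
    d2sq (empiricalMeasure x) (empiricalMeasure y) ≤
      (Fintype.card ι : ℝ)⁻¹ * ∑ i, (x i - y (σ i)) ^ 2 := by
  have hcoupling := d2sq_le_integral (ρ := empiricalMeasure fun i => (x i, y (σ i)))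
    (map_empiricalMeasure measurable_fst _)
    ((map_empiricalMeasure measurable_snd _).trans (empiricalMeasure_comp_perm y σ))
    (integrable_empiricalMeasure _ _)
  rwa [integral_empiricalMeasure, smul_eq_mul] at hcoupling

/-- **Lemma.** For `n × n` real symmetric matrices `A` and `B`,
`d_2(μ_A, μ_B)² ≤ (1/n) Tr((A − B)²)`, where `d_2` is the `L²`-Wasserstein distance and
`μ_A`, `μ_B` are the empirical spectral distributions. -/
theorem wasserstein_esd_bound (n : ℕ) (A B : Matrix (Fin n) (Fin n) ℝ)
    (hA : A.IsHermitian) (hB : B.IsHermitian) :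
    d2sq (esdOfMatrix A) (esdOfMatrix B) ≤ (1 / n : ℝ) * ((A - B) ^ 2).trace := by
  rcases Nat.eq_zero_or_pos n with rfl | hn
  -- for `n = 0` both sides vanish: the ESDs are the zero measure and `1 / 0 = 0`
  · simp [esdOfMatrix, d2sq_zero_left]
  have : Nonempty (Fin n) := Fin.pos_iff_nonempty.mp hn
  obtain ⟨σ, hσ⟩ := hA.exists_perm_sum_sq_eigenvalues_sub_le hB
  rw [esdOfMatrix_eq_empiricalMeasure hA, esdOfMatrix_eq_empiricalMeasure hB]
  calc _ ≤ (Fintype.card (Fin n) : ℝ)⁻¹ * ∑ i, (hA.eigenvalues i - hB.eigenvalues (σ i)) ^ 2 :=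
        d2sq_empiricalMeasure_le _ _ σ
    _ ≤ (1 / n : ℝ) * ((A - B) ^ 2).trace := by
        rw [Fintype.card_fin, one_div]
        gcongr
end
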